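/- Fix real constants C and D. Let θ, μ_θ : ℝ → ℝ be differentiable functions satisfying θ' = −μ_θ and μ_θ' = −C²·sin(D − θ)·cos(D − θ) on an interval. Then the function H(t) = −(1/2)·μ_θ(t)² + (C²/4)·cos(2D − 2θ(t)) is constant on that interval. -/

import Mathlib

/-!
With `θ` as position and `μθ` as momentum, the two equations are Hamilton's equations
`θ' = ∂H/∂μθ`, `μθ' = -∂H/∂θ` for `H(θ, μθ) = -(1/2) μθ² + (C²/4) cos(2D - 2θ)`, because
`∂H/∂θ = (C²/2) sin(2D - 2θ) = C² sin(D - θ) cos(D - θ)`. By the chain rule the derivative of `H`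
along a solution is `∂H/∂θ · ∂H/∂μθ - ∂H/∂μθ · ∂H/∂θ = 0`, and a function with vanishing
derivative on an interval is constant there by the mean value theorem.
-/

open ContinuousLinearMap

theorem Set.OrdConnected.eq_of_hasDerivAt_eq_zero {E : Type*} [NormedAddCommGroup E]
    [NormedSpace ℝ E] {f : ℝ → E} {s : Set ℝ} (hs : s.OrdConnected)
    (hf : ∀ t ∈ s, HasDerivAt f 0 t) {a b : ℝ} (ha : a ∈ s) (hb : b ∈ s) : f a = f b := by
  have h := hs.convex.norm_image_sub_le_of_norm_hasDerivWithin_le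
    (fun t ht => (hf t ht).hasDerivWithinAt) (fun _ _ => norm_zero.le) hb ha
  rwa [zero_mul, norm_le_zero_iff, sub_eq_zero] at h

/-- `L (1, 0)` and `L (0, 1)` are the partial derivatives `∂H/∂q` and `∂H/∂p`, so the hypotheses
on `q` and `p` are Hamilton's equations. -/
theorem HasFDerivAt.hasDerivAt_comp_eq_zero_of_hamilton {H : ℝ × ℝ → ℝ} {q p : ℝ → ℝ} {t : ℝ}
    {L : ℝ × ℝ →L[ℝ] ℝ} (hH : HasFDerivAt H L (q t, p t))
    (hq : HasDerivAt q (L (0, 1)) t) (hp : HasDerivAt p (-L (1, 0)) t) :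
    HasDerivAt (fun t => H (q t, p t)) 0 t := by
  refine (hH.comp_hasDerivAt t (hq.prodMk hp)).congr_deriv ?_
  have hdecomp : ((L (0, 1), -L (1, 0)) : ℝ × ℝ) = L (0, 1) • (1, 0) + (-L (1, 0)) • (0, 1) := by
    simp
  rw [hdecomp, map_add, map_smul, map_smul, smul_eq_mul, smul_eq_mul]
  ring

/-- The point `x` stands for `(θ, μθ)`. -/
noncomputable def se2Hamiltonian (C D : ℝ) (x : ℝ × ℝ) : ℝ :=
  -(1/2) * x.2 ^ 2 + (C^2/4) * Real.cos (2*D - 2*x.1)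

theorem hasFDerivAt_se2Hamiltonian (C D : ℝ) (x : ℝ × ℝ) :
    HasFDerivAt (se2Hamiltonian C D)
      ((C^2 * Real.sin (D - x.1) * Real.cos (D - x.1)) • fst ℝ ℝ ℝ - x.2 • snd ℝ ℝ ℝ) x := by
  have h := (((hasFDerivAt_snd (p := x)).pow 2).const_mul (-(1/2) : ℝ)).add
    ((((hasFDerivAt_const (2*D) x).sub
      ((hasFDerivAt_fst (p := x)).const_mul 2)).cos).const_mul (C^2/4))
  refine h.congr_fderiv ?_
  have hsin : Real.sin (2*D - 2*x.1) = 2 * Real.sin (D - x.1) * Real.cos (D - x.1) := by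
    rw [← Real.sin_two_mul]
    ring_nf
  ext
  · simp [hsin]
    ring
  · simp

/-- For constants `C, D` and differentiable `θ, μ_θ : ℝ → ℝ` with `θ' = −μ_θ` and
`μ_θ' = −C² sin(D − θ) cos(D − θ)` on an interval `s`, the Hamiltonian
`H(t) = −(1/2) μ_θ(t)² + (C²/4) cos(2D − 2θ(t))` is constant on `s`. -/
theorem stmt_15 (C D : ℝ) (s : Set ℝ) (hs : s.OrdConnected)
    (θ μθ : ℝ → ℝ)
    (hθ : ∀ t ∈ s, HasDerivAt θ (-μθ t) t)
    (hμθ : ∀ t ∈ s, HasDerivAt μθ (-C^2 * Real.sin (D - θ t) * Real.cos (D - θ t)) t) :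
    ∀ t₁ ∈ s, ∀ t₂ ∈ s,
      -(1/2) * μθ t₁ ^ 2 + (C^2/4) * Real.cos (2*D - 2*θ t₁) =
      -(1/2) * μθ t₂ ^ 2 + (C^2/4) * Real.cos (2*D - 2*θ t₂) := by
  intro t₁ ht₁ t₂ ht₂
  refine hs.eq_of_hasDerivAt_eq_zero (f := fun t => se2Hamiltonian C D (θ t, μθ t))
    (fun t ht => ?_) ht₁ ht₂
  refine (hasFDerivAt_se2Hamiltonian C D _).hasDerivAt_comp_eq_zero_of_hamilton ?_ ?_
  · exact (hθ t ht).congr_deriv (by simp)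
  · exact (hμθ t ht).congr_deriv (by simp)
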